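/- Let G be an inductive groupoid (an ordered groupoid whose identities form a meet-semilattice). Then (G, ⊗) with the pseudoproduct is an inverse semigroup whose idempotents are exactly the identities of G, and the natural partial order of (G, ⊗) coincides with the order of G. -/

import Mathlib

/-- An algebraic groupoid: a type with an everywhere-defined multiplication which is
only required to behave well on composable pairs (`d x = r y`), together with
inversion and domain/range maps (valued in the identities of the groupoid). -/
class Groupoid' (G : Type*) where
  mul : G → G → G
  inv : G → G
  d : G → G
  r : G → G
  r_d : ∀ x : G, r (d x) = d x
  d_r : ∀ x : G, d (r x) = r x
  mul_assoc : ∀ x y z : G, d x = r y → d y = r z → mul (mul x y) z = mul x (mul y z)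
  d_mul : ∀ x y : G, d x = r y → d (mul x y) = d y
  r_mul : ∀ x y : G, d x = r y → r (mul x y) = r x
  mul_d : ∀ x : G, mul x (d x) = x
  r_mul_cancel : ∀ x : G, mul (r x) x = x
  mul_inv : ∀ x : G, mul x (inv x) = r x
  inv_mul : ∀ x : G, mul (inv x) x = d x
  d_inv : ∀ x : G, d (inv x) = r x
  r_inv : ∀ x : G, r (inv x) = d x

open Groupoid'
open scoped Classical

/-- An element is an identity of the groupoid if it is its own domain. -/
def IsId {G : Type*} [Groupoid' G] (e : G) : Prop := d e = e

/-- An ordered groupoid: axioms (OG1), (OG2) and (OG3) (restriction exists uniquely). -/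
class OrderedGroupoid (G : Type*) [Groupoid' G] [PartialOrder G] : Prop where
  og1 : ∀ x y : G, x ≤ y → inv x ≤ inv y
  og2 : ∀ x y u v : G, x ≤ y → u ≤ v → d x = r u → d y = r v → mul x u ≤ mul y v
  og3 : ∀ x e : G, IsId e → e ≤ d x → ∃! z : G, z ≤ x ∧ d z = e


/-- The restriction `(x | e)` of `x` to an identity `e ≤ d x`: the unique element
below `x` with domain `e` (junk value `x` if undefined). -/
noncomputable def res {G : Type*} [Groupoid' G] [PartialOrder G] [OrderedGroupoid G]
    (x e : G) : G :=
  if h : IsId e ∧ e ≤ d x then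
    Classical.choose (OrderedGroupoid.og3 x e h.1 h.2).exists
  else x

/-- The corestriction `(e | x)` of `x` to an identity `e ≤ r x`. -/
noncomputable def cores {G : Type*} [Groupoid' G] [PartialOrder G] [OrderedGroupoid G]
    (e x : G) : G :=
  inv (res (inv x) e)


/-- `e` is the meet of the identities `a` and `b` in the poset of identities. -/
def IsMeetId {G : Type*} [Groupoid' G] [PartialOrder G] (e a b : G) : Prop :=
  IsId e ∧ e ≤ a ∧ e ≤ b ∧ ∀ f : G, IsId f → f ≤ a → f ≤ b → f ≤ e

/-- The pseudoproduct `x ⊗ y` is defined when `d x ∧ r y` exists. -/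
def PsDefined {G : Type*} [Groupoid' G] [PartialOrder G] (x y : G) : Prop :=
  ∃ e : G, IsMeetId e (d x) (r y)

/-- The pseudoproduct `x ⊗ y = (x | e)(e | y)` where `e = d x ∧ r y`
(junk value `x` when undefined). -/
noncomputable def pseudo {G : Type*} [Groupoid' G] [PartialOrder G] [OrderedGroupoid G]
    (x y : G) : G :=
  if h : PsDefined x y then
    mul (res x (Classical.choose h)) (cores (Classical.choose h) y)
  else x

/-! The pseudoproduct `x ⊗ y` is the greatest composable product `x' y'` with `x' ≤ x`
and `y' ≤ y`, and everything below it is again such a product. Hence both bracketings of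
`x ⊗ y ⊗ z` are the greatest composable product `x' y' z'` below `(x, y, z)`.
If `x ⊗ x = x`, write `x = x' y'` with `x', y' ≤ x`: then `x'` has the range and `y'` the
domain of `x`, which forces `x' = y' = x`, so `x = x x` is an identity. Identities multiply
by their meet, hence commute, and `y ⊗ e` is the restriction of `y` to `d y ∧ e`, which gives
the natural partial order. -/

namespace Groupoid'

variable {G : Type*} [Groupoid' G]

theorem isId_r (x : G) : IsId (r x) := d_r x

theorem isId_d (x : G) : IsId (d x) := by
  rw [IsId, ← r_d x, d_r]

theorem _root_.IsId.r_eq {e : G} (he : IsId e) : r e = e := by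
  rw [← he, r_d]

theorem inv_inv (x : G) : inv (inv x) = x :=
  calc inv (inv x)
      = mul (inv (inv x)) (mul (inv x) x) := by rw [Groupoid'.inv_mul, ← r_inv, ← d_inv, mul_d]
    _ = mul (mul (inv (inv x)) (inv x)) x := (Groupoid'.mul_assoc _ _ _ (d_inv _) (d_inv x)).symm
    _ = x := by rw [Groupoid'.inv_mul, d_inv, r_mul_cancel]

theorem isId_of_mul_self {x : G} (hx : mul x x = x) (hdr : d x = r x) : IsId x :=
  calc d x = mul (inv x) (mul x x) := by rw [hx, Groupoid'.inv_mul]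
    _ = mul (r x) x := by rw [← Groupoid'.mul_assoc _ _ _ (d_inv x) hdr, Groupoid'.inv_mul, hdr]
    _ = x := r_mul_cancel x

end Groupoid'

section Meets

variable {G : Type*} [Groupoid' G] [PartialOrder G]

theorem IsMeetId.unique {e e' a b : G} (h : IsMeetId e a b) (h' : IsMeetId e' a b) : e = e' :=
  le_antisymm (h'.2.2.2 e h.1 h.2.1 h.2.2.1) (h.2.2.2 e' h'.1 h'.2.1 h'.2.2.1)

theorem IsMeetId.symm {e a b : G} (h : IsMeetId e a b) : IsMeetId e b a :=
  ⟨h.1, h.2.2.1, h.2.1, fun f hf hfb hfa => h.2.2.2 f hf hfa hfb⟩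

theorem isMeetId_of_le {a b : G} (ha : IsId a) (hab : a ≤ b) : IsMeetId a a b :=
  ⟨ha, le_rfl, hab, fun _ _ hfa _ => hfa⟩

end Meets

namespace OrderedGroupoid

variable {G : Type*} [Groupoid' G] [PartialOrder G] [OrderedGroupoid G]

theorem r_mono : Monotone (r : G → G) := fun x y h => by
  simpa only [Groupoid'.mul_inv] using og2 _ _ _ _ h (og1 _ _ h) (r_inv x).symm (r_inv y).symm

theorem d_mono : Monotone (d : G → G) := fun x y h => by
  simpa only [Groupoid'.inv_mul] using og2 _ _ _ _ (og1 _ _ h) h (d_inv x) (d_inv y)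

theorem eq_of_le_of_d_eq {a b x : G} (ha : a ≤ x) (hb : b ≤ x) (h : d a = d b) : a = b :=
  (og3 x (d b) (isId_d b) (d_mono hb)).unique ⟨ha, h⟩ ⟨hb, rfl⟩

theorem eq_of_le_of_r_eq {a b x : G} (ha : a ≤ x) (hb : b ≤ x) (h : r a = r b) : a = b := by
  have : inv a = inv b :=
    eq_of_le_of_d_eq (og1 _ _ ha) (og1 _ _ hb) (by rw [d_inv, d_inv, h])
  simpa only [Groupoid'.inv_inv] using congrArg inv this

section Restriction

variable {x y e : G} (he : IsId e)
include he

theorem res_spec (hex : e ≤ d x) : res x e ≤ x ∧ d (res x e) = e := by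
  rw [res, dif_pos ⟨he, hex⟩]
  exact Classical.choose_spec (og3 x e he hex).exists

theorem res_le (hex : e ≤ d x) : res x e ≤ x := (res_spec he hex).1

theorem d_res (hex : e ≤ d x) : d (res x e) = e := (res_spec he hex).2

theorem le_res {x' : G} (hx : x' ≤ x) (hle : d x' ≤ e) (hex : e ≤ d x) : x' ≤ res x e := by
  have hle' : d x' ≤ d (res x e) := by rwa [d_res he hex]
  have hres := res_le (isId_d x') hle'
  rwa [eq_of_le_of_d_eq (hres.trans (res_le he hex)) hx (d_res (isId_d x') hle')] at hres

theorem cores_le (hey : e ≤ r y) : cores e y ≤ y := by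
  unfold cores
  simpa only [Groupoid'.inv_inv] using og1 _ _ (res_le he (x := inv y) (by rwa [d_inv]))

theorem r_cores (hey : e ≤ r y) : r (cores e y) = e := by
  rw [cores, r_inv, d_res he (by rwa [d_inv])]

theorem le_cores {y' : G} (hy : y' ≤ y) (hle : r y' ≤ e) (hey : e ≤ r y) :
    y' ≤ cores e y := by
  unfold cores
  simpa only [Groupoid'.inv_inv] using
    og1 _ _ (le_res he (og1 _ _ hy) (by rwa [d_inv]) (by rwa [d_inv]))

end Restriction

theorem res_eq_of_le {x y : G} (h : x ≤ y) : res y (d x) = x :=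
  eq_of_le_of_d_eq (res_le (isId_d x) (d_mono h)) h (d_res (isId_d x) (d_mono h))

theorem cores_eq_of_le {x y : G} (h : x ≤ y) : cores (r x) y = x :=
  eq_of_le_of_r_eq (cores_le (isId_r x) (r_mono h)) h (r_cores (isId_r x) (r_mono h))

theorem exists_eq_mul_of_le_mul {a b w : G} (hab : d a = r b) (hw : w ≤ mul a b) :
    ∃ a' ≤ a, ∃ b' ≤ b, d a' = r b' ∧ w = mul a' b' := by
  have hwb : d w ≤ d b := d_mul a b hab ▸ d_mono hw
  have hb' : res b (d w) ≤ b := res_le (isId_d w) hwb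
  have hra : r (res b (d w)) ≤ d a := hab ▸ r_mono hb'
  have hcomp : d (res a (r (res b (d w)))) = r (res b (d w)) := d_res (isId_r _) hra
  refine ⟨_, res_le (isId_r _) hra, _, hb', hcomp,
    eq_of_le_of_d_eq hw (og2 _ _ _ _ (res_le (isId_r _) hra) hb' hcomp hab) ?_⟩
  rw [d_mul _ _ hcomp, d_res (isId_d w) hwb]

theorem pseudo_eq {x y e : G} (h : IsMeetId e (d x) (r y)) :
    pseudo x y = mul (res x e) (cores e y) := by
  have hd : PsDefined x y := ⟨e, h⟩
  rw [pseudo, dif_pos hd, (Classical.choose_spec hd).unique h]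

theorem le_pseudo {x y x' y' : G} (h : PsDefined x y) (hx : x' ≤ x) (hy : y' ≤ y)
    (hc : d x' = r y') : mul x' y' ≤ pseudo x y := by
  obtain ⟨e, he⟩ := h
  have hde : d x' ≤ e := he.2.2.2 _ (isId_d x') (d_mono hx) (hc ▸ r_mono hy)
  rw [pseudo_eq he]
  exact og2 _ _ _ _ (le_res he.1 hx hde he.2.1) (le_cores he.1 hy (hc ▸ hde) he.2.2.1) hc
    (by rw [d_res he.1 he.2.1, r_cores he.1 he.2.2.1])

theorem exists_eq_mul_of_le_pseudo {x y w : G} (h : PsDefined x y) (hw : w ≤ pseudo x y) :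
    ∃ x' ≤ x, ∃ y' ≤ y, d x' = r y' ∧ w = mul x' y' := by
  obtain ⟨e, he⟩ := h
  rw [pseudo_eq he] at hw
  obtain ⟨a, ha, b, hb, hab, rfl⟩ :=
    exists_eq_mul_of_le_mul ((d_res he.1 he.2.1).trans (r_cores he.1 he.2.2.1).symm) hw
  exact ⟨a, ha.trans (res_le he.1 he.2.1), b, hb.trans (cores_le he.1 he.2.2.1), hab, rfl⟩

section Associativity

variable (hdef : ∀ x y : G, PsDefined x y)
include hdef

theorem pseudo_pseudo_le (x y z : G) : pseudo (pseudo x y) z ≤ pseudo x (pseudo y z) := by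
  obtain ⟨u, hu, z', hz', huz, hL⟩ := exists_eq_mul_of_le_pseudo (hdef _ z) le_rfl
  obtain ⟨x', hx', y', hy', hxy, rfl⟩ := exists_eq_mul_of_le_pseudo (hdef x y) hu
  have hyz : d y' = r z' := (d_mul x' y' hxy).symm.trans huz
  rw [hL, Groupoid'.mul_assoc _ _ _ hxy hyz]
  exact le_pseudo (hdef _ _) hx' (le_pseudo (hdef y z) hy' hz' hyz) (by rw [r_mul _ _ hyz, hxy])

theorem pseudo_le_pseudo_pseudo (x y z : G) : pseudo x (pseudo y z) ≤ pseudo (pseudo x y) z := by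
  obtain ⟨x', hx', v, hv, hxv, hR⟩ := exists_eq_mul_of_le_pseudo (hdef x _) le_rfl
  obtain ⟨y', hy', z', hz', hyz, rfl⟩ := exists_eq_mul_of_le_pseudo (hdef y z) hv
  have hxy : d x' = r y' := hxv.trans (r_mul y' z' hyz)
  rw [hR, ← Groupoid'.mul_assoc _ _ _ hxy hyz]
  exact le_pseudo (hdef _ _) (le_pseudo (hdef x y) hx' hy' hxy) hz' (by rw [d_mul _ _ hxy, hyz])

theorem pseudo_assoc (x y z : G) : pseudo (pseudo x y) z = pseudo x (pseudo y z) :=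
  (pseudo_pseudo_le hdef x y z).antisymm (pseudo_le_pseudo_pseudo hdef x y z)

end Associativity

theorem pseudo_of_d_eq_r {x y : G} (h : d x = r y) : pseudo x y = mul x y := by
  rw [pseudo_eq (isMeetId_of_le (isId_d x) h.le), res_eq_of_le le_rfl, h, cores_eq_of_le le_rfl]

theorem pseudo_inv_self_right (x : G) : pseudo x (inv x) = r x :=
  (pseudo_of_d_eq_r (r_inv x).symm).trans (Groupoid'.mul_inv x)

theorem pseudo_r_self (x : G) : pseudo (r x) x = x :=
  (pseudo_of_d_eq_r (d_r x)).trans (r_mul_cancel x)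

theorem pseudo_isId_right {y e m : G} (he : IsId e) (hm : IsMeetId m (d y) e) :
    pseudo y e = res y m := by
  have hcores : cores m e = m := by
    simpa only [hm.1.r_eq] using cores_eq_of_le hm.2.2.1
  rw [pseudo_eq (he.r_eq.symm ▸ hm), hcores]
  calc mul (res y m) m = mul (res y m) (d (res y m)) := by rw [d_res hm.1 hm.2.1]
    _ = res y m := mul_d _

theorem pseudo_of_isId {e f m : G} (he : IsId e) (hf : IsId f) (hm : IsMeetId m e f) :
    pseudo e f = m := by
  have hdm : d m = m := hm.1
  rw [pseudo_isId_right hf (he.symm ▸ hm)]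
  simpa only [hdm] using res_eq_of_le hm.2.1

theorem pseudo_self_of_isId {e : G} (he : IsId e) : pseudo e e = e :=
  pseudo_of_isId he he (isMeetId_of_le he le_rfl)

theorem isId_of_pseudo_self {x : G} (h : PsDefined x x) (hx : pseudo x x = x) : IsId x := by
  obtain ⟨a, ha, b, hb, hab, hmul⟩ := exists_eq_mul_of_le_pseudo h hx.ge
  have hb' : b = x := eq_of_le_of_d_eq hb le_rfl (by rw [hmul, d_mul a b hab])
  have ha' : a = x := eq_of_le_of_r_eq ha le_rfl (by rw [hmul, r_mul a b hab])
  subst ha' hb'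
  exact Groupoid'.isId_of_mul_self hmul.symm hab

theorem le_iff_exists_isId_eq_pseudo
    (hInd : ∀ e f : G, IsId e → IsId f → ∃ m : G, IsMeetId m e f) {x y : G} :
    x ≤ y ↔ ∃ e : G, IsId e ∧ x = pseudo y e := by
  constructor
  · intro h
    refine ⟨d x, isId_d x, ?_⟩
    rw [pseudo_isId_right (isId_d x) (isMeetId_of_le (isId_d x) (d_mono h)).symm, res_eq_of_le h]
  · rintro ⟨e, he, rfl⟩
    obtain ⟨m, hm⟩ := hInd (d y) e (isId_d y) he
    rw [pseudo_isId_right he hm]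
    exact res_le hm.1 hm.2.1

end OrderedGroupoid

open OrderedGroupoid

theorem stmt16 {G : Type*} [Groupoid' G] [PartialOrder G] [OrderedGroupoid G]
    (hInd : ∀ e f : G, IsId e → IsId f → ∃ m : G, IsMeetId m e f) :
    (∀ x y z : G, pseudo (pseudo x y) z = pseudo x (pseudo y z)) ∧
    (∀ x : G, pseudo (pseudo x (inv x)) x = x) ∧
    (∀ x : G, pseudo (pseudo (inv x) x) (inv x) = inv x) ∧
    (∀ e f : G, pseudo e e = e → pseudo f f = f → pseudo e f = pseudo f e) ∧
    (∀ x : G, pseudo x x = x ↔ IsId x) ∧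
    (∀ x y : G, x ≤ y ↔ ∃ e : G, pseudo e e = e ∧ x = pseudo y e) := by
  have hdef : ∀ x y : G, PsDefined x y := fun x y => hInd _ _ (isId_d x) (isId_r y)
  have hidem : ∀ x : G, pseudo x x = x ↔ IsId x :=
    fun x => ⟨isId_of_pseudo_self (hdef x x), pseudo_self_of_isId⟩
  have hinv : ∀ x : G, pseudo (pseudo x (inv x)) x = x := fun x => by
    rw [pseudo_inv_self_right, pseudo_r_self]
  refine ⟨pseudo_assoc hdef, hinv, fun x => ?_, fun e f he hf => ?_, hidem, fun x y => ?_⟩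
  · simpa only [Groupoid'.inv_inv] using hinv (inv x)
  · rw [hidem] at he hf
    obtain ⟨m, hm⟩ := hInd e f he hf
    rw [pseudo_of_isId he hf hm, pseudo_of_isId hf he hm.symm]
  · simp only [hidem]
    exact le_iff_exists_isId_eq_pseudo hInd
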